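/- Let κ be a regular cardinal and μ a (κ,κ⁺)-cardinal. For α < κ⁺ and ξ < ht(μ), the set μ_ξ(α) := X ∩ α is well-defined, i.e., independent of the choice of X ∈ μ with rank(X) = ξ and α ∈ X, and such an X always exists. -/

import Mathlib

open Set Cardinal Ordinal

noncomputable section

/-- Lower a (small) ordinal of `Ordinal.{1}` to `Ordinal.{0}` (the inverse of `Ordinal.lift`
on its range). -/
noncomputable def olower (o : Ordinal.{1}) : Ordinal.{0} :=
  sInf {a : Ordinal.{0} | Ordinal.lift.{1} a = o}

/-- The order type of a set of ordinals. -/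
noncomputable def otp (A : Set Ordinal.{0}) : Ordinal.{0} :=
  olower (Ordinal.type (Subrel ((· < ·) : Ordinal → Ordinal → Prop) (· ∈ A)))

/-- The canonical order-preserving transfer map from a set of ordinals `X` to a set of
ordinals `Y` of the same order type: an element `a ∈ X` is sent to the unique element of `Y`
occupying the same position. -/
noncomputable def omap (X Y : Set Ordinal) (a : Ordinal) : Ordinal :=
  sInf {b | b ∈ Y ∧ otp (Y ∩ Set.Iio b) = otp (X ∩ Set.Iio a)}

/-- `IsStar X₁ X₂ X` says `X = X₁ * X₂`: `X₁` and `X₂` have the same order type,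
`X = X₁ ∪ X₂`, and `X₁ ∩ X₂ < X₁ \ X₂ < X₂ \ X₁` elementwise. -/
def IsStar (X₁ X₂ X : Set Ordinal) : Prop :=
  otp X₁ = otp X₂ ∧ X = X₁ ∪ X₂ ∧
  (∀ a ∈ X₁ ∩ X₂, ∀ b ∈ X₁ \ X₂, a < b) ∧
  (∀ b ∈ X₁ \ X₂, ∀ c ∈ X₂ \ X₁, b < c)

set_option linter.deprecated false in
/-- A `(κ,κ⁺)`-cardinal (a neat simplified `(κ,1)`-morass presented as a family of sets):
a family `μ ⊆ ℘_κ(κ⁺)` which is well-founded under strict inclusion, locally small,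
homogeneous, directed, locally almost directed, covers `κ⁺` and is neat. -/
structure TwoCardinal (κ : Cardinal.{0}) where
  mu : Set (Set Ordinal)
  mem_sub : ∀ X ∈ mu, X ⊆ Set.Iio (Order.succ κ).ord
  mem_small : ∀ X ∈ mu, (otp X).card < κ
  wf : WellFounded fun X Y : mu => (X : Set Ordinal) ⊂ (Y : Set Ordinal)
  locSmall : ∀ X : mu,
    #{Z : mu // (Z : Set Ordinal) ⊂ (X : Set Ordinal)} < Cardinal.lift.{1} κ
  homog : ∀ X Y : mu, (wf.apply X).rank = (wf.apply Y).rank →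
    otp (X : Set Ordinal) = otp (Y : Set Ordinal) ∧
    {Z | Z ∈ mu ∧ Z ⊂ (Y : Set Ordinal)} =
      (fun Z => omap (X : Set Ordinal) (Y : Set Ordinal) '' Z) ''
        {Z | Z ∈ mu ∧ Z ⊂ (X : Set Ordinal)}
  directed : ∀ X ∈ mu, ∀ Y ∈ mu, ∃ Z ∈ mu, X ⊆ Z ∧ Y ⊆ Z
  locAlmostDirected : ∀ X : mu,
    (∀ Z₁ ∈ mu, ∀ Z₂ ∈ mu, Z₁ ⊂ (X : Set Ordinal) → Z₂ ⊂ (X : Set Ordinal) →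
      ∃ Z ∈ mu, Z ⊂ (X : Set Ordinal) ∧ Z₁ ⊆ Z ∧ Z₂ ⊆ Z) ∨
    (∃ X₁ X₂ : mu, (wf.apply X₁).rank = (wf.apply X₂).rank ∧
      IsStar (X₁ : Set Ordinal) (X₂ : Set Ordinal) (X : Set Ordinal) ∧
      {Z | Z ∈ mu ∧ Z ⊂ (X : Set Ordinal)} =
        {Z | Z ∈ mu ∧ Z ⊂ (X₁ : Set Ordinal)} ∪ {Z | Z ∈ mu ∧ Z ⊂ (X₂ : Set Ordinal)} ∪
          {(X₁ : Set Ordinal), (X₂ : Set Ordinal)})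
  covers : ⋃₀ mu = Set.Iio (Order.succ κ).ord
  neat : ∀ X : mu, (wf.apply X).rank ≠ 0 →
    (X : Set Ordinal) = ⋃₀ {Z | Z ∈ mu ∧ Z ⊂ (X : Set Ordinal)}

namespace TwoCardinal

variable {κ : Cardinal} (M : TwoCardinal κ)

set_option linter.deprecated false in
/-- The rank of an element of `μ` in the well-founded order `(μ, ⊂)`. -/
noncomputable def rank (X : M.mu) : Ordinal := olower ((M.wf.apply X).rank)

/-- The height of the well-founded order `(μ, ⊂)`. -/
noncomputable def ht : Ordinal := sSup (Set.range fun X : M.mu => M.rank X + 1)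

/-- The term `μ_ξ(α)` of the μ-sequence at `α`: equal to `X ∩ α` for any `X ∈ μ` of
rank `ξ` containing `α` (this is independent of the choice of `X`). -/
noncomputable def seq (α ξ : Ordinal) : Set Ordinal :=
  ⋃₀ {S | ∃ X : M.mu, M.rank X = ξ ∧ α ∈ (X : Set Ordinal) ∧
    S = (X : Set Ordinal) ∩ Set.Iio α}

/-- The μ-coloring `m(α,β) = min{rank X : α, β ∈ X ∈ μ}`. -/
noncomputable def mcol (a b : Ordinal) : Ordinal :=
  sInf {ξ | ∃ X : M.mu, M.rank X = ξ ∧ a ∈ (X : Set Ordinal) ∧ b ∈ (X : Set Ordinal)}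

end TwoCardinal

/-! Both halves go by well-founded induction along `(μ, ⊂)`, using at each `X` the dichotomy of
local almost directedness: either the elements of `μ` below `X` are directed, or `X = X₁ * X₂`
and everything below `X` lies below `X₁` or `X₂`.

For existence, descend from an `X ∋ α` of rank `≥ ξ`: neatness puts `α` into some `Z ⊂ X`, and
in either case of the dichotomy there is a smaller element that still contains `α` and still has
rank `≥ ξ`.

For uniqueness, take `X, Y ⊆ Z` of equal rank containing `α`. In the directed case both lie below
a smaller common element. The only new case is `X ⊆ Z₁`, `Y ⊆ Z₂` for `Z = Z₁ * Z₂`. Then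
`Z₁ ∩ [0, α] = Z₂ ∩ [0, α]`, so the homogeneity map `Z₁ → Z₂` is the identity up to `α` and sends
nothing across `α`. It induces an isomorphism of the trees below `Z₁` and `Z₂`, hence preserves
ranks, so `Y` is the image of some `S ⊆ Z₁` of the same rank with `S ∩ α = Y ∩ α`, and the
induction hypothesis for `Z₁` compares `X` with `S`. -/

universe u

theorem Set.image_inter_Iic_eq {β : Type*} [LinearOrder β] {f : β → β} {S : Set β} {α : β}
    (hfix : ∀ a ∈ S, a ≤ α → f a = a) (hgt : ∀ a ∈ S, α < a → α < f a) :
    f '' S ∩ Iic α = S ∩ Iic α := by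
  ext b
  constructor
  · rintro ⟨⟨a, ha, rfl⟩, hb⟩
    rcases le_or_gt a α with hle | hlt
    · rw [hfix a ha hle] at hb ⊢
      exact ⟨ha, hb⟩
    · exact absurd hb (not_le.2 (hgt a ha hlt))
  · rintro ⟨hb, hbα⟩
    exact ⟨⟨b, hb, hfix b hb hbα⟩, hbα⟩

theorem Set.inter_Iio_eq_of_inter_Iic_eq {β : Type*} [Preorder β] {A B : Set β} {α a : β}
    (h : A ∩ Iic α = B ∩ Iic α) (ha : a ≤ α) : A ∩ Iio a = B ∩ Iio a := by
  rw [← inter_eq_right.2 (Iio_subset_Iic ha), ← inter_assoc, h, inter_assoc]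

theorem Acc.rank_eq_of_bisim {β γ : Type u} {r : β → β → Prop} {s : γ → γ → Prop}
    (R : β → γ → Prop)
    (hforth : ∀ a b, R a b → ∀ a', r a' a → ∃ b', s b' b ∧ R a' b')
    (hback : ∀ a b, R a b → ∀ b', s b' b → ∃ a', r a' a ∧ R a' b')
    {a : β} {b : γ} (ha : Acc r a) (hb : Acc s b) (h : R a b) : ha.rank = hb.rank := by
  induction ha generalizing b with
  | intro a ha IH =>
  rw [Acc.rank_eq, Acc.rank_eq]
  apply le_antisymm <;> refine Ordinal.iSup_le fun ⟨c, hc⟩ => ?_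
  · obtain ⟨d, hd, hcd⟩ := hforth a b h c hc
    rw [IH c hc (hb.inv hd) hcd]
    exact Ordinal.le_iSup (fun d : {d // s d b} => Order.succ (hb.inv d.2).rank) ⟨d, hd⟩
  · obtain ⟨d, hd, hdc⟩ := hback a b h c hc
    rw [← IH d hd (hb.inv hc) hdc]
    exact Ordinal.le_iSup (fun d : {d // r d a} => Order.succ (Acc.rank (ha d d.2))) ⟨d, hd⟩

section OrderType

theorem olower_lift (a : Ordinal.{0}) : olower (Ordinal.lift.{1} a) = a := by
  simp [olower, Ordinal.lift_inj]

variable {A : Set Ordinal.{0}} {o : Ordinal.{0}}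

-- `otp` lowers the order type to `Ordinal.{0}`; for an unbounded set it is the junk value `0`.
theorem lift_otp_of_subset_Iio (hA : A ⊆ Iio o) :
    Ordinal.lift.{1} (otp A) =
      Ordinal.type (Subrel ((· < ·) : Ordinal → Ordinal → Prop) (· ∈ A)) := by
  have hle : Ordinal.type (Subrel ((· < ·) : Ordinal → Ordinal → Prop) (· ∈ A)) ≤
      Ordinal.lift.{1} o := by
    rw [← Ordinal.typein_ordinal o, ← Ordinal.type_subrel]
    exact RelEmbedding.ordinal_type_le ⟨⟨inclusion hA, inclusion_injective hA⟩, Iff.rfl⟩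
  obtain ⟨a, ha⟩ := Ordinal.mem_range_lift_of_le hle
  rw [otp, ← ha, olower_lift]

theorem lift_otp_inter_Iio {a : Ordinal} (hA : A ⊆ Iio o) (ha : a ∈ A) :
    Ordinal.lift.{1} (otp (A ∩ Iio a)) =
      Ordinal.typein (Subrel ((· < ·) : Ordinal → Ordinal → Prop) (· ∈ A)) ⟨a, ha⟩ := by
  rw [lift_otp_of_subset_Iio (inter_subset_left.trans hA), ← Ordinal.type_subrel]
  exact Ordinal.type_eq.2 ⟨⟨⟨fun x => ⟨⟨x.1, x.2.1⟩, x.2.2⟩, fun y => ⟨y.1.1, y.1.2, y.2⟩,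
    fun _ => rfl, fun _ => rfl⟩, Iff.rfl⟩⟩

theorem otp_inter_Iio_lt_otp_inter_Iio_iff {a b : Ordinal} (hA : A ⊆ Iio o) (ha : a ∈ A)
    (hb : b ∈ A) : otp (A ∩ Iio a) < otp (A ∩ Iio b) ↔ a < b := by
  rw [← Ordinal.lift_lt.{1}, lift_otp_inter_Iio hA ha, lift_otp_inter_Iio hA hb]
  exact Ordinal.typein_lt_typein _

theorem injOn_otp_inter_Iio (hA : A ⊆ Iio o) : InjOn (fun a => otp (A ∩ Iio a)) A := by
  intro a ha b hb h
  rw [← Ordinal.lift_inj.{1}] at h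
  simp only [lift_otp_inter_Iio hA ha, lift_otp_inter_Iio hA hb] at h
  exact congrArg Subtype.val (Ordinal.typein_injective _ h)

theorem exists_otp_inter_Iio_eq {ι : Ordinal} (hA : A ⊆ Iio o) (hι : ι < otp A) :
    ∃ a ∈ A, otp (A ∩ Iio a) = ι := by
  rw [← Ordinal.lift_lt.{1}, lift_otp_of_subset_Iio hA] at hι
  obtain ⟨⟨a, ha⟩, e⟩ := Ordinal.typein_surj _ hι
  exact ⟨a, ha, Ordinal.lift_inj.1 ((lift_otp_inter_Iio hA ha).trans e)⟩

theorem otp_inter_Iio_lt_otp {a : Ordinal} (hA : A ⊆ Iio o) (ha : a ∈ A) :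
    otp (A ∩ Iio a) < otp A := by
  rw [← Ordinal.lift_lt.{1}, lift_otp_inter_Iio hA ha, lift_otp_of_subset_Iio hA]
  exact Ordinal.typein_lt_type _ _

end OrderType

section Transfer

variable {A B : Set Ordinal.{0}} {o : Ordinal.{0}}

theorem omap_eq_of_otp_eq {a b : Ordinal} (hB : B ⊆ Iio o) (hb : b ∈ B)
    (h : otp (B ∩ Iio b) = otp (A ∩ Iio a)) : omap A B a = b := by
  have : {c | c ∈ B ∧ otp (B ∩ Iio c) = otp (A ∩ Iio a)} = {b} :=
    Set.eq_singleton_iff_unique_mem.2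
      ⟨⟨hb, h⟩, fun c hc => injOn_otp_inter_Iio hB hc.1 hb (hc.2.trans h.symm)⟩
  rw [omap, this, csInf_singleton]

theorem omap_mem_and_otp_eq {a : Ordinal} (hA : A ⊆ Iio o) (hB : B ⊆ Iio o)
    (hAB : otp A = otp B) (ha : a ∈ A) :
    omap A B a ∈ B ∧ otp (B ∩ Iio (omap A B a)) = otp (A ∩ Iio a) := by
  obtain ⟨b, hb, h⟩ := exists_otp_inter_Iio_eq hB (hAB ▸ otp_inter_Iio_lt_otp hA ha)
  rw [omap_eq_of_otp_eq hB hb h]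
  exact ⟨hb, h⟩

theorem strictMonoOn_omap (hA : A ⊆ Iio o) (hB : B ⊆ Iio o) (hAB : otp A = otp B) :
    StrictMonoOn (omap A B) A := by
  intro a ha a' ha' h
  obtain ⟨hm, he⟩ := omap_mem_and_otp_eq hA hB hAB ha
  obtain ⟨hm', he'⟩ := omap_mem_and_otp_eq hA hB hAB ha'
  rwa [← otp_inter_Iio_lt_otp_inter_Iio_iff hB hm hm', he, he',
    otp_inter_Iio_lt_otp_inter_Iio_iff hA ha ha']

theorem omap_eq_self {a : Ordinal} (hB : B ⊆ Iio o) (ha : a ∈ B)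
    (h : A ∩ Iio a = B ∩ Iio a) : omap A B a = a :=
  omap_eq_of_otp_eq hB ha (by rw [h])

end Transfer

theorem IsStar.inter_Iic_eq {X₁ X₂ X : Set Ordinal} {α : Ordinal} (h : IsStar X₁ X₂ X)
    (hne : ¬X₁ ⊆ X₂) (h₁ : α ∈ X₁) (h₂ : α ∈ X₂) : X₁ ∩ Iic α = X₂ ∩ Iic α := by
  obtain ⟨-, -, hlow, hmid⟩ := h
  ext b
  refine ⟨fun ⟨hb, hbα⟩ => ⟨?_, hbα⟩, fun ⟨hb, hbα⟩ => ⟨?_, hbα⟩⟩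
  · by_contra hb₂
    exact (hlow α ⟨h₁, h₂⟩ b ⟨hb, hb₂⟩).not_ge hbα
  · by_contra hb₁
    obtain ⟨c, hc₁, hc₂⟩ := not_subset.1 hne
    exact ((hlow α ⟨h₁, h₂⟩ c ⟨hc₁, hc₂⟩).trans (hmid c ⟨hc₁, hc₂⟩ b ⟨hb, hb₁⟩)).not_ge hbα

namespace TwoCardinal

variable {κ : Cardinal.{0}} (M : TwoCardinal κ)

-- `M.rank` lowers the rank to `Ordinal.{0}`, which is faithful only once the rank is known to be
-- small: by local smallness and regularity, every rank is below `κ`.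
theorem wfrank_lt_lift_ord (hκ : κ.IsRegular) (X : M.mu) :
    (M.wf.apply X).rank < Ordinal.lift.{1} κ.ord := by
  induction X using M.wf.induction with
  | _ X IH =>
  rw [(M.wf.apply X).rank_eq]
  simp_rw [Order.succ_eq_add_one]
  apply Ordinal.iSup_add_one_lt_of_lt_cof
  · rw [← Ordinal.lift_cof, hκ.cof_ord]
    exact M.locSmall X
  · exact fun Z => IH Z Z.2

theorem lift_rank (hκ : κ.IsRegular) (X : M.mu) :
    Ordinal.lift.{1} (M.rank X) = (M.wf.apply X).rank := by
  obtain ⟨a, ha⟩ := Ordinal.mem_range_lift_of_le (M.wfrank_lt_lift_ord hκ X).le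
  rw [rank, ← ha, olower_lift]

variable {M}

theorem rank_eq_rank_iff (hκ : κ.IsRegular) {X Y : M.mu} :
    M.rank X = M.rank Y ↔ (M.wf.apply X).rank = (M.wf.apply Y).rank := by
  rw [← Ordinal.lift_inj, M.lift_rank hκ, M.lift_rank hκ]

theorem rank_lt_rank_of_ssubset (hκ : κ.IsRegular) {X Y : M.mu}
    (h : (X : Set Ordinal) ⊂ Y) : M.rank X < M.rank Y := by
  rw [← Ordinal.lift_lt, M.lift_rank hκ, M.lift_rank hκ]
  exact (M.wf.apply Y).rank_lt_of_rel h

theorem rank_le_rank_of_subset (hκ : κ.IsRegular) {X Y : M.mu}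
    (h : (X : Set Ordinal) ⊆ Y) : M.rank X ≤ M.rank Y := by
  rcases h.ssubset_or_eq with h | h
  · exact (rank_lt_rank_of_ssubset hκ h).le
  · rw [Subtype.ext h]

theorem eq_of_subset_of_rank_eq (hκ : κ.IsRegular) {X Y : M.mu}
    (h : (X : Set Ordinal) ⊆ Y) (hr : M.rank X = M.rank Y) : X = Y := by
  by_contra hne
  exact (rank_lt_rank_of_ssubset hκ (h.ssubset_of_ne (Subtype.coe_ne_coe.2 hne))).ne hr

theorem exists_ssubset_le_rank (hκ : κ.IsRegular) {X : M.mu} {ξ : Ordinal}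
    (h : ξ < M.rank X) : ∃ Z : M.mu, (Z : Set Ordinal) ⊂ X ∧ ξ ≤ M.rank Z := by
  rw [← Ordinal.lift_lt, M.lift_rank hκ, (M.wf.apply X).rank_eq, Ordinal.lt_iSup_iff] at h
  obtain ⟨⟨Z, hZ⟩, hlt⟩ := h
  rw [Order.lt_succ_iff, ← M.lift_rank hκ, Ordinal.lift_le] at hlt
  exact ⟨Z, hZ, hlt⟩

theorem exists_le_rank_of_lt_ht {ξ : Ordinal} (h : ξ < M.ht) : ∃ X : M.mu, ξ ≤ M.rank X := by
  obtain ⟨_, ⟨X, rfl⟩, hlt⟩ := exists_lt_of_lt_csSup' h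
  exact ⟨X, Order.lt_add_one_iff.1 hlt⟩

/-- The second alternative of local almost directedness, `X = X₁ * X₂`. -/
structure SplitsInto (X X₁ X₂ : M.mu) : Prop where
  rank_eq : M.rank X₁ = M.rank X₂
  left_ssubset : (X₁ : Set Ordinal) ⊂ X
  right_ssubset : (X₂ : Set Ordinal) ⊂ X
  eq_union : (X : Set Ordinal) = (X₁ : Set Ordinal) ∪ X₂
  subset_or_subset : ∀ Z : M.mu, (Z : Set Ordinal) ⊂ X →
    (Z : Set Ordinal) ⊆ X₁ ∨ (Z : Set Ordinal) ⊆ X₂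
  inter_Iic_eq : ∀ α ∈ (X₁ : Set Ordinal), α ∈ (X₂ : Set Ordinal) →
    (X₁ : Set Ordinal) ∩ Iic α = (X₂ : Set Ordinal) ∩ Iic α

theorem directed_below_or_exists_splitsInto (hκ : κ.IsRegular) (X : M.mu) :
    (∀ Z₁ Z₂ : M.mu, (Z₁ : Set Ordinal) ⊂ X → (Z₂ : Set Ordinal) ⊂ X →
      ∃ Z : M.mu, (Z : Set Ordinal) ⊂ X ∧ (Z₁ : Set Ordinal) ⊆ Z ∧ (Z₂ : Set Ordinal) ⊆ Z) ∨
    ∃ X₁ X₂, SplitsInto X X₁ X₂ := by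
  rcases M.locAlmostDirected X with hdir | ⟨X₁, X₂, hr, hstar, hbelow⟩
  · left
    intro Z₁ Z₂ h₁ h₂
    obtain ⟨Z, hZ, hZX, h₁Z, h₂Z⟩ := hdir Z₁ Z₁.2 Z₂ Z₂.2 h₁ h₂
    exact ⟨⟨Z, hZ⟩, hZX, h₁Z, h₂Z⟩
  right
  have below_iff : ∀ Z : M.mu, (Z : Set Ordinal) ⊂ X ↔
      Z = X₁ ∨ Z = X₂ ∨ (Z : Set Ordinal) ⊂ X₁ ∨ (Z : Set Ordinal) ⊂ X₂ := by
    intro Z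
    have := congrArg (Z.1 ∈ ·) hbelow
    simpa [Z.2, or_assoc, Subtype.ext_iff] using this
  have h₁ : (X₁ : Set Ordinal) ⊂ X := (below_iff X₁).2 (by simp)
  have h₂ : (X₂ : Set Ordinal) ⊂ X := (below_iff X₂).2 (by simp)
  refine ⟨X₁, X₂, (rank_eq_rank_iff hκ).2 hr, h₁, h₂, hstar.2.1, fun Z hZ => ?_,
    fun α hα₁ hα₂ => hstar.inter_Iic_eq (fun h => h₂.ne ?_) hα₁ hα₂⟩
  · rcases (below_iff Z).1 hZ with rfl | rfl | h | h
    exacts [.inl le_rfl, .inr le_rfl, .inl h.subset, .inr h.subset]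
  · rw [hstar.2.1, union_eq_self_of_subset_left h]

theorem exists_image_omap_eq_of_ssubset (hκ : κ.IsRegular) {Z₁ Z₂ : M.mu}
    (hr : M.rank Z₁ = M.rank Z₂) {Y : M.mu} (hY : (Y : Set Ordinal) ⊂ Z₂) :
    ∃ S : M.mu, (S : Set Ordinal) ⊂ Z₁ ∧ omap Z₁ Z₂ '' S = Y ∧ M.rank S = M.rank Y := by
  obtain ⟨hotp, hbelow⟩ := M.homog Z₁ Z₂ ((rank_eq_rank_iff hκ).1 hr)
  set f := omap (Z₁ : Set Ordinal) Z₂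
  have hinj : InjOn f Z₁ := (strictMonoOn_omap (M.mem_sub _ Z₁.2) (M.mem_sub _ Z₂.2) hotp).injOn
  have image_mem : ∀ S : M.mu, (S : Set Ordinal) ⊂ Z₁ → f '' S ∈ M.mu ∧ f '' S ⊂ Z₂ := by
    intro S hS
    have := mem_image_of_mem (f '' ·) (show S.1 ∈ {Z | Z ∈ M.mu ∧ Z ⊂ Z₁} from ⟨S.2, hS⟩)
    rwa [← hbelow] at this
  have preimage_mem : ∀ Y : M.mu, (Y : Set Ordinal) ⊂ Z₂ →
      ∃ S : M.mu, (S : Set Ordinal) ⊂ Z₁ ∧ f '' S = Y := by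
    intro Y hY
    obtain ⟨S, ⟨hS, hSZ⟩, hSY⟩ := hbelow.subset ⟨Y.2, hY⟩
    exact ⟨⟨S, hS⟩, hSZ, hSY⟩
  let R (S Y : M.mu) : Prop := (S : Set Ordinal) ⊂ Z₁ ∧ f '' S = Y
  have forth : ∀ S Y, R S Y → ∀ S' : M.mu, (S' : Set Ordinal) ⊂ S →
      ∃ Y' : M.mu, (Y' : Set Ordinal) ⊂ Y ∧ R S' Y' := by
    rintro S Y ⟨hS, hSY⟩ S' hS'
    refine ⟨⟨_, (image_mem S' (hS'.trans hS)).1⟩, ?_, hS'.trans hS, rfl⟩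
    exact hSY ▸ (hinj.image_ssubset_image_iff (hS'.trans hS).subset hS.subset).2 hS'
  have back : ∀ S Y, R S Y → ∀ Y' : M.mu, (Y' : Set Ordinal) ⊂ Y →
      ∃ S' : M.mu, (S' : Set Ordinal) ⊂ S ∧ R S' Y' := by
    rintro S Y ⟨hS, hSY⟩ Y' hY'
    obtain ⟨S', hS'Z, hS'Y'⟩ := preimage_mem Y' (hY'.trans_subset (hSY ▸ (image_mem S hS).2.subset))
    refine ⟨S', ?_, hS'Z, hS'Y'⟩
    exact (hinj.image_ssubset_image_iff hS'Z.subset hS.subset).1 (hS'Y' ▸ hSY ▸ hY')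
  obtain ⟨S, hS, hSY⟩ := preimage_mem Y hY
  exact ⟨S, hS, hSY, congrArg olower
    (Acc.rank_eq_of_bisim R forth back (M.wf.apply S) (M.wf.apply Y) ⟨hS, hSY⟩)⟩

/-- The μ-sequence at `α` is well defined below `Z`. -/
def IsCoherentBelow (M : TwoCardinal κ) (α : Ordinal) (Z : M.mu) : Prop :=
  ∀ X Y : M.mu, (X : Set Ordinal) ⊆ Z → (Y : Set Ordinal) ⊆ Z → M.rank X = M.rank Y →
    α ∈ (X : Set Ordinal) → α ∈ (Y : Set Ordinal) →
    (X : Set Ordinal) ∩ Iio α = (Y : Set Ordinal) ∩ Iio α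

theorem IsCoherentBelow.inter_Iio_eq_of_rank_eq {α : Ordinal} {Z₁ Z₂ : M.mu}
    (hcoh : M.IsCoherentBelow α Z₁) (hκ : κ.IsRegular) (hr : M.rank Z₁ = M.rank Z₂)
    (hseg : (Z₁ : Set Ordinal) ∩ Iic α = (Z₂ : Set Ordinal) ∩ Iic α) {X Y : M.mu}
    (hX : (X : Set Ordinal) ⊆ Z₁) (hY : (Y : Set Ordinal) ⊆ Z₂) (hXY : M.rank X = M.rank Y) (hαX : α ∈ (X : Set Ordinal))
    (hαY : α ∈ (Y : Set Ordinal)) :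
    (X : Set Ordinal) ∩ Iio α = (Y : Set Ordinal) ∩ Iio α := by
  rcases hY.ssubset_or_eq with hY | hY
  swap
  · obtain rfl := Subtype.ext hY
    obtain rfl := eq_of_subset_of_rank_eq hκ hX (hXY.trans hr.symm)
    exact inter_Iio_eq_of_inter_Iic_eq hseg le_rfl
  have hZ₁ := M.mem_sub _ Z₁.2
  have hZ₂ := M.mem_sub _ Z₂.2
  set f := omap (Z₁ : Set Ordinal) Z₂
  have hfix : ∀ a ∈ (Z₁ : Set Ordinal), a ≤ α → f a = a := fun a ha haα =>
    omap_eq_self hZ₂ ((hseg.subset ⟨ha, haα⟩).1) (inter_Iio_eq_of_inter_Iic_eq hseg haα)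
  have hmono : StrictMonoOn f Z₁ :=
    strictMonoOn_omap hZ₁ hZ₂ (M.homog Z₁ Z₂ ((rank_eq_rank_iff hκ).1 hr)).1
  have hgt : ∀ a ∈ (Z₁ : Set Ordinal), α < a → α < f a := fun a ha hαa => by
    simpa only [hfix α (hX hαX) le_rfl] using hmono (hX hαX) ha hαa
  obtain ⟨S, hSZ, hfS, hSY⟩ := exists_image_omap_eq_of_ssubset hκ hr hY
  have hseg' : (Y : Set Ordinal) ∩ Iic α = (S : Set Ordinal) ∩ Iic α := hfS ▸
    image_inter_Iic_eq (fun a ha => hfix a (hSZ.subset ha)) (fun a ha => hgt a (hSZ.subset ha))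
  have hαS : α ∈ (S : Set Ordinal) := (hseg'.subset ⟨hαY, self_mem_Iic⟩).1
  rw [inter_Iio_eq_of_inter_Iic_eq hseg' le_rfl]
  exact hcoh X S hX hSZ.subset (hXY.trans hSY.symm) hαX hαS

theorem isCoherentBelow (hκ : κ.IsRegular) (α : Ordinal) (Z : M.mu) : M.IsCoherentBelow α Z := by
  induction Z using M.wf.induction with
  | _ Z IH =>
  intro X Y hX hY hr hαX hαY
  rcases hX.ssubset_or_eq with hX | hX
  swap
  · obtain rfl := Subtype.ext hX
    obtain rfl := eq_of_subset_of_rank_eq hκ hY hr.symm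
    rfl
  rcases hY.ssubset_or_eq with hY | hY
  swap
  · obtain rfl := Subtype.ext hY
    obtain rfl := eq_of_subset_of_rank_eq hκ hX.subset hr
    rfl
  rcases directed_below_or_exists_splitsInto hκ Z with hdir | ⟨Z₁, Z₂, h⟩
  · obtain ⟨W, hW, hXW, hYW⟩ := hdir X Y hX hY
    exact IH W hW X Y hXW hYW hr hαX hαY
  have IH₁ := IH Z₁ h.left_ssubset
  have IH₂ := IH Z₂ h.right_ssubset
  rcases h.subset_or_subset X hX with hX₁ | hX₂ <;> rcases h.subset_or_subset Y hY with hY₁ | hY₂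
  · exact IH₁ X Y hX₁ hY₁ hr hαX hαY
  · exact IH₁.inter_Iio_eq_of_rank_eq hκ h.rank_eq (h.inter_Iic_eq α (hX₁ hαX) (hY₂ hαY))
      hX₁ hY₂ hr hαX hαY
  · exact (IH₁.inter_Iio_eq_of_rank_eq hκ h.rank_eq (h.inter_Iic_eq α (hY₁ hαY) (hX₂ hαX))
      hY₁ hX₂ hr.symm hαY hαX).symm
  · exact IH₂ X Y hX₂ hY₂ hr hαX hαY

theorem exists_rank_eq_mem (hκ : κ.IsRegular) {α ξ : Ordinal} (X : M.mu)
    (hαX : α ∈ (X : Set Ordinal)) (hξ : ξ ≤ M.rank X) :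
    ∃ W : M.mu, M.rank W = ξ ∧ α ∈ (W : Set Ordinal) := by
  induction X using M.wf.induction with
  | _ X IH =>
  rcases hξ.eq_or_lt with hξ | hξ
  · exact ⟨X, hξ.symm, hαX⟩
  obtain ⟨Z₁, hZ₁X, hξZ₁⟩ := exists_ssubset_le_rank hκ hξ
  rcases directed_below_or_exists_splitsInto hκ X with hdir | ⟨X₁, X₂, h⟩
  · have hne : (M.wf.apply X).rank ≠ 0 := ((M.wf.apply X).rank_lt_of_rel hZ₁X).ne_bot
    obtain ⟨Z₀, ⟨hZ₀, hZ₀X⟩, hαZ₀⟩ := (M.neat X hne).subset hαX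
    obtain ⟨W, hWX, hZ₀W, hZ₁W⟩ := hdir ⟨Z₀, hZ₀⟩ Z₁ hZ₀X hZ₁X
    exact IH W hWX (hZ₀W hαZ₀) (hξZ₁.trans (rank_le_rank_of_subset hκ hZ₁W))
  have hξ₁ : ξ ≤ M.rank X₁ := by
    rcases h.subset_or_subset Z₁ hZ₁X with hZ₁ | hZ₁
    · exact hξZ₁.trans (rank_le_rank_of_subset hκ hZ₁)
    · exact hξZ₁.trans ((rank_le_rank_of_subset hκ hZ₁).trans_eq h.rank_eq.symm)
  rcases h.eq_union ▸ hαX with hα | hα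
  · exact IH X₁ h.left_ssubset hα hξ₁
  · exact IH X₂ h.right_ssubset hα (hξ₁.trans_eq h.rank_eq)

end TwoCardinal

/-- The μ-sequence `μ_ξ(α) = X ∩ α` is well-defined: an `X ∈ μ` of rank `ξ` containing `α`
always exists, and `X ∩ α` does not depend on the choice of such an `X`. -/
theorem museq_well_defined (κ : Cardinal) (hκ : κ.IsRegular) (M : TwoCardinal κ)
    (α ξ : Ordinal) (hα : α < (Order.succ κ).ord) (hξ : ξ < M.ht) :
    (∃ X : M.mu, M.rank X = ξ ∧ α ∈ (X : Set Ordinal)) ∧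
    ∀ X Y : M.mu, M.rank X = ξ → M.rank Y = ξ →
      α ∈ (X : Set Ordinal) → α ∈ (Y : Set Ordinal) →
      (X : Set Ordinal) ∩ Set.Iio α = (Y : Set Ordinal) ∩ Set.Iio α := by
  constructor
  · obtain ⟨X₀, hX₀, hαX₀⟩ : α ∈ ⋃₀ M.mu := M.covers ▸ hα
    obtain ⟨X₁, hξX₁⟩ := TwoCardinal.exists_le_rank_of_lt_ht hξ
    obtain ⟨Z, hZ, hX₀Z, hX₁Z⟩ := M.directed X₀ hX₀ X₁ X₁.2
    exact TwoCardinal.exists_rank_eq_mem hκ ⟨Z, hZ⟩ (hX₀Z hαX₀)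
      (hξX₁.trans (TwoCardinal.rank_le_rank_of_subset hκ hX₁Z))
  · intro X Y hX hY hαX hαY
    obtain ⟨Z, hZ, hXZ, hYZ⟩ := M.directed X X.2 Y Y.2
    exact TwoCardinal.isCoherentBelow hκ α ⟨Z, hZ⟩ X Y hXZ hYZ (hX.trans hY.symm) hαX hαY
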